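/- arXiv:1002.4350 — 2 statements merged into one kernel-verified Lean document; each statement's English description precedes it below -/
import Mathlib

section
/- Let (Γ,w) be a stable weighted graph of genus g ≥ 2, d a balanced multidegree of total degree d, and A ⊆ V a subset with d_A = m_A(d). Let B ⊆ V∖A be such that the induced sub-multigraph on B is a connected component of the induced sub-multigraph on V∖A and exactly one edge of Γ joins B to A. Then d_{A∪B} = m_{A∪B}(d). -/
open Finset

noncomputable section
open scoped Classical

variable {V : Type} [Fintype V] [DecidableEq V]

/-- The simple graph underlying a multigraph with multiplicity function `k`:
`u` and `v` are adjacent iff `u ≠ v` and some edge joins them. -/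
def graphOf (k : V → V → ℕ) : SimpleGraph V where
  Adj u v := u ≠ v ∧ (0 < k u v ∨ 0 < k v u)
  symm := ⟨fun u v h => ⟨h.1.symm, h.2.symm⟩⟩
  loopless := ⟨fun v h => h.1 rfl⟩

/-- The number of edges of a multigraph: loops plus half the ordered count. -/
def numEdges (k : V → V → ℕ) : ℕ :=
  (∑ v, k v v) + (∑ u, ∑ v ∈ Finset.univ.erase u, k u v) / 2

/-- The genus of a weighted graph: `∑ w(v) + b₁`, with `b₁ = #E - #V + 1`. -/
def genus (k : V → V → ℕ) (w : V → ℕ) : ℤ :=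
  (∑ v, (w v : ℤ)) + ((numEdges k : ℤ) - (Fintype.card V : ℤ) + 1)

/-- Stability: connected, and each weight-zero vertex has valency at least 3. -/
def IsStable (k : V → V → ℕ) (w : V → ℕ) : Prop :=
  (graphOf k).Connected ∧
    ∀ v, w v = 0 → 3 ≤ 2 * k v v + ∑ u ∈ Finset.univ.erase v, k u v

/-- `δ_A`: the number of edges joining `A` to its complement. -/
def deltaA (k : V → V → ℕ) (A : Finset V) : ℤ :=
  ∑ u ∈ A, ∑ v ∈ Aᶜ, (k u v : ℤ)

/-- `w_A = Σ_{v∈A} (2w(v) − 2 + 2k(v,v) + Σ_{u≠v} k(u,v))`. -/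
def wA (k : V → V → ℕ) (w : V → ℕ) (A : Finset V) : ℤ :=
  ∑ v ∈ A, (2 * (w v : ℤ) - 2 + 2 * (k v v : ℤ) + ∑ u ∈ Finset.univ.erase v, (k u v : ℤ))

/-- `d_A`: the total degree of a multidegree on the subset `A`. -/
def degA (d : V → ℤ) (A : Finset V) : ℤ := ∑ v ∈ A, d v

/-- `m_A(d) = d·w_A/(2g−2) − δ_A/2 ∈ ℚ`. -/
def mA (k : V → V → ℕ) (w : V → ℕ) (D : ℤ) (A : Finset V) : ℚ :=
  (D : ℚ) * (wA k w A : ℚ) / ((2 * genus k w - 2 : ℤ) : ℚ) - (deltaA k A : ℚ) / 2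

/-- A balanced multidegree of total degree `D`. -/
def IsBalanced (k : V → V → ℕ) (w : V → ℕ) (D : ℤ) (d : V → ℤ) : Prop :=
  degA d Finset.univ = D ∧ ∀ A : Finset V, mA k w D A ≤ (degA d A : ℚ)

/-- A strictly balanced multidegree of total degree `D`. -/
def IsStrictlyBalanced (k : V → V → ℕ) (w : V → ℕ) (D : ℤ) (d : V → ℤ) : Prop :=
  IsBalanced k w D d ∧
    ∀ A : Finset V, A ≠ ∅ → A ≠ Finset.univ → mA k w D A < (degA d A : ℚ)

/-- `(Γ,w)` is `d`-general if every balanced multidegree of total degree `d`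
is strictly balanced. -/
def IsDGeneral (k : V → V → ℕ) (w : V → ℕ) (D : ℤ) : Prop :=
  ∀ d : V → ℤ, IsBalanced k w D d → IsStrictlyBalanced k w D d

/-- The generator `c_v` of the lattice `Λ`. -/
def cvec (k : V → V → ℕ) (v : V) : V → ℤ := fun u =>
  if u = v then -(∑ x ∈ Finset.univ.erase v, (k x v : ℤ)) else (k u v : ℤ)

/-- The lattice `Λ ⊆ ℤ^V` generated by the `c_v`. -/
def Lambda (k : V → V → ℕ) : AddSubgroup (V → ℤ) :=
  AddSubgroup.closure (Set.range (cvec k))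

/-- The total-degree homomorphism `ℤ^V → ℤ`. -/
def sumHom (V : Type) [Fintype V] : (V → ℤ) →+ ℤ :=
  { toFun := fun d => ∑ v, d v
    map_zero' := by simp
    map_add' := fun a b => by simp [Finset.sum_add_distrib] }

/-- `Z = {d ∈ ℤ^V : Σ_v d(v) = 0}`. -/
def Zsub (V : Type) [Fintype V] : AddSubgroup (V → ℤ) := (sumHom V).ker

/-- Remove the edge(s) joining `a` and `b` from the multigraph. -/
def removeEdge (k : V → V → ℕ) (a b : V) : V → V → ℕ := fun u v =>
  if (u = a ∧ v = b) ∨ (u = b ∧ v = a) then 0 else k u v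

/-- `a`–`b` is a bridge: a single non-loop edge whose removal disconnects the graph. -/
def IsBridge (k : V → V → ℕ) (a b : V) : Prop :=
  a ≠ b ∧ k a b = 1 ∧ ¬ (graphOf (removeEdge k a b)).Connected

/-- `A` induces a connected sub-multigraph. -/
def IsConnectedSubset (k : V → V → ℕ) (A : Finset V) : Prop :=
  ((graphOf k).induce (A : Set V)).Connected

/-- The equivalence relation `≈` on `V` generated by bridges. -/
def contractSetoid (k : V → V → ℕ) : Setoid V :=
  ⟨Relation.EqvGen (fun u v => IsBridge k u v), Relation.EqvGen.is_equivalence _⟩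

/-- The vertex set `V² = V/≈` of the contracted graph `Γ²`. -/
def V2 (k : V → V → ℕ) : Type := Quotient (contractSetoid k)

instance (k : V → V → ℕ) : Finite (V2 k) := Quotient.finite _

instance (k : V → V → ℕ) : Fintype (V2 k) := Fintype.ofFinite _

/-- The fiber of the quotient map `φ : V → V²` over a class `c`. -/
def fiber (k : V → V → ℕ) (c : V2 k) : Finset V :=
  Finset.univ.filter (fun v => Quotient.mk (contractSetoid k) v = c)

/-- The multiplicity function `k²` of the contracted graph `Γ²`. -/
def k2 (k : V → V → ℕ) : V2 k → V2 k → ℕ := fun c c' =>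
  if c = c' then
    (∑ v ∈ fiber k c, k v v) +
      (∑ u ∈ fiber k c, ∑ v ∈ (fiber k c).erase u,
        if IsBridge k u v then 0 else k u v) / 2
  else ∑ u ∈ fiber k c, ∑ v ∈ fiber k c', k u v

/-- The weight function `w²` of the contracted weighted graph `(Γ²,w²)`. -/
def w2 (k : V → V → ℕ) (w : V → ℕ) : V2 k → ℕ := fun c => ∑ v ∈ fiber k c, w v

/-- The pushforward `α(d)` of a multidegree to the contracted graph. -/
def alphaMap (k : V → V → ℕ) (d : V → ℤ) : V2 k → ℤ := fun c => ∑ v ∈ fiber k c, d v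

/-- The setoid on multidegrees of total degree `D`: two are equivalent if their
difference lies in `Λ`; the quotient is `Δ^d`. -/
def degSetoid (k : V → V → ℕ) (D : ℤ) : Setoid {d : V → ℤ // (∑ v, d v) = D} :=
  ⟨fun a b => (a : V → ℤ) - (b : V → ℤ) ∈ Lambda k, by
    constructor
    · intro a; simpa using (Lambda k).zero_mem
    · intro a b h; have h2 := (Lambda k).neg_mem h; rwa [neg_sub] at h2
    · intro a b c h1 h2
      have h3 := (Lambda k).add_mem h1 h2
      rwa [sub_add_sub_cancel] at h3⟩

/-- Number of edges of the sub-multigraph induced on `A`. -/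
def numEdgesIn (k : V → V → ℕ) (A : Finset V) : ℕ :=
  (∑ v ∈ A, k v v) + (∑ u ∈ A, ∑ v ∈ A.erase u, k u v) / 2

/-- Blow-up of a multigraph at the single bridge `a`–`b`: one exceptional
vertex is inserted in the middle of the bridge. -/
def blowK (k : V → V → ℕ) (a b : V) : (V ⊕ Unit) → (V ⊕ Unit) → ℕ
  | Sum.inl u, Sum.inl v => if (u = a ∧ v = b) ∨ (u = b ∧ v = a) then 0 else k u v
  | Sum.inl u, Sum.inr _ => if u = a ∨ u = b then 1 else 0
  | Sum.inr _, Sum.inl v => if v = a ∨ v = b then 1 else 0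
  | Sum.inr _, Sum.inr _ => 0

/-- Weight function of the blow-up at one bridge: exceptional vertex has weight 0. -/
def blowW (w : V → ℕ) : V ⊕ Unit → ℕ
  | Sum.inl v => w v
  | Sum.inr _ => 0

/-- Blow-up of a multigraph at a set `S` of bridges (given as ordered pairs):
one exceptional vertex is inserted in the middle of each bridge of `S`. -/
def blowKS (k : V → V → ℕ) (S : Finset (V × V)) :
    (V ⊕ {p : V × V // p ∈ S}) → (V ⊕ {p : V × V // p ∈ S}) → ℕ
  | Sum.inl u, Sum.inl v => if (u, v) ∈ S ∨ (v, u) ∈ S then 0 else k u v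
  | Sum.inl u, Sum.inr e => if u = e.1.1 ∨ u = e.1.2 then 1 else 0
  | Sum.inr e, Sum.inl v => if v = e.1.1 ∨ v = e.1.2 then 1 else 0
  | Sum.inr _, Sum.inr _ => 0

/-- Weight function of the blow-up at a set of bridges. -/
def blowWS (w : V → ℕ) (S : Finset (V × V)) : (V ⊕ {p : V × V // p ∈ S}) → ℕ
  | Sum.inl v => w v
  | Sum.inr _ => 0

/-- Strictly balanced multidegree of total degree `D` on the blow-up `Γ̂_S`:
balanced (with degree 1 on each exceptional vertex), and the inequality is
strict for every proper nonempty `A` such that some edge between `A` and its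
complement has no exceptional endpoint. -/
def IsStrictlyBalancedBlowS (k : V → V → ℕ) (w : V → ℕ) (S : Finset (V × V)) (D : ℤ)
    (dh : (V ⊕ {p : V × V // p ∈ S}) → ℤ) : Prop :=
  IsBalanced (blowKS k S) (blowWS w S) D dh ∧
    (∀ e : {p : V × V // p ∈ S}, dh (Sum.inr e) = 1) ∧
    ∀ A : Finset (V ⊕ {p : V × V // p ∈ S}), A ≠ ∅ → A ≠ Finset.univ →
      (∃ u v : V, Sum.inl u ∈ A ∧ Sum.inl v ∉ A ∧ 0 < blowKS k S (Sum.inl u) (Sum.inl v)) →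
      mA (blowKS k S) (blowWS w S) D A < (degA dh A : ℚ)

/-- Multiplicity function of the vine graph: two vertices joined by `δ` edges,
no loops. -/
def vineK (δ : ℕ) : Fin 2 → Fin 2 → ℕ := fun u v => if u = v then 0 else δ

/-- Weight function of the vine graph with weights `g₁, g₂`. -/
def vineW (g1 g2 : ℕ) : Fin 2 → ℕ := fun v => if v = 0 then g1 else g2

/-- The data of a stable vine graph of genus `g` with weights `g₁, g₂` and `δ` edges. -/
def StableVine (g : ℤ) (g1 g2 δ : ℕ) : Prop :=
  2 ≤ δ ∧ ((g1 = 0 ∨ g2 = 0) → 3 ≤ δ) ∧ (g1 : ℤ) + (g2 : ℤ) + (δ : ℤ) - 1 = g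
/-! If every edge leaving `B` ends in `A`, balancedness of the complement `Bᶜ` gives
`d_B ≤ m_B + δ_B`, while `m_{A∪B} = m_A + m_B + δ_B` because the `δ_B` edges between `A`
and `B` stop being counted in `δ_{A∪B}`. Hence `d_{A∪B} = d_A + d_B ≤ m_{A∪B}`, and
balancedness of `A ∪ B` gives the reverse inequality. -/

section EdgesBetween

variable {α : Type} (k : α → α → ℕ)

def edgesBetween (S T : Finset α) : ℤ := ∑ u ∈ S, ∑ v ∈ T, (k u v : ℤ)

variable {k}

lemma edgesBetween_comm (hsym : ∀ u v, k u v = k v u) (S T : Finset α) :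
    edgesBetween k S T = edgesBetween k T S := by
  unfold edgesBetween
  rw [Finset.sum_comm]
  simp only [hsym]

variable [DecidableEq α]

lemma edgesBetween_union_right {S T U : Finset α} (h : Disjoint T U) :
    edgesBetween k S (T ∪ U) = edgesBetween k S T + edgesBetween k S U := by
  unfold edgesBetween
  rw [← Finset.sum_add_distrib]
  exact Finset.sum_congr rfl fun u _ => Finset.sum_union h

lemma even_sum_sum_erase (hsym : ∀ u v, k u v = k v u) (s : Finset α) :
    Even (∑ u ∈ s, ∑ v ∈ s.erase u, k u v) := by
  induction s using Finset.induction_on with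
  | empty => simp
  | @insert x t hx ih =>
    rw [Finset.sum_insert hx, Finset.erase_insert hx]
    have hsplit : ∀ u ∈ t,
        ∑ v ∈ (insert x t).erase u, k u v = k u x + ∑ v ∈ t.erase u, k u v := by
      intro u hu
      rw [Finset.erase_insert_of_ne (ne_of_mem_of_not_mem hu hx).symm,
        Finset.sum_insert fun h => hx (Finset.mem_of_mem_erase h)]
    rw [Finset.sum_congr rfl hsplit, Finset.sum_add_distrib]
    simp only [hsym x]
    obtain ⟨c, hc⟩ := ih
    exact ⟨∑ u ∈ t, k u x + c, by omega⟩

lemma degA_union (d : α → ℤ) {S T : Finset α} (h : Disjoint S T) :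
    degA d (S ∪ T) = degA d S + degA d T := Finset.sum_union h

end EdgesBetween

section Balanced

variable {k : V → V → ℕ} (w : V → ℕ)

lemma deltaA_eq_edgesBetween_compl (S : Finset V) : deltaA k S = edgesBetween k S Sᶜ := rfl

lemma deltaA_compl (hsym : ∀ u v, k u v = k v u) (S : Finset V) :
    deltaA k Sᶜ = deltaA k S := by
  rw [deltaA_eq_edgesBetween_compl, compl_compl, edgesBetween_comm hsym,
    deltaA_eq_edgesBetween_compl]

lemma compl_eq_union_compl_union {S T : Finset V} (h : Disjoint S T) :
    Sᶜ = T ∪ (S ∪ T)ᶜ := by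
  ext x
  have := @Finset.disjoint_left.1 h x
  simp only [Finset.mem_compl, Finset.mem_union]
  tauto

lemma deltaA_union (hsym : ∀ u v, k u v = k v u) {S T : Finset V} (h : Disjoint S T) :
    deltaA k (S ∪ T) = deltaA k S + deltaA k T - 2 * edgesBetween k S T := by
  have hT : Tᶜ = S ∪ (S ∪ T)ᶜ := Finset.union_comm S T ▸ compl_eq_union_compl_union h.symm
  simp only [deltaA_eq_edgesBetween_compl]
  rw [compl_eq_union_compl_union h, hT,
    edgesBetween_union_right (disjoint_compl_right_iff.2 Finset.subset_union_right),
    edgesBetween_union_right (disjoint_compl_right_iff.2 Finset.subset_union_left),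
    edgesBetween_comm hsym T S]
  unfold edgesBetween
  rw [Finset.sum_union h]
  ring

lemma deltaA_eq_edgesBetween_of_neighbors_subset {S T : Finset V} (h : Disjoint S T)
    (hnbr : ∀ u ∈ S, ∀ v, v ∉ T → v ∉ S → k u v = 0) :
    deltaA k S = edgesBetween k S T := by
  refine Finset.sum_congr rfl fun u hu => (Finset.sum_subset ?_ ?_).symm
  · exact Finset.subset_compl_iff_disjoint_right.2 h.symm
  · intro v hv hvT
    simp [hnbr u hu v hvT (Finset.mem_compl.1 hv)]

lemma two_mul_numEdges (hsym : ∀ u v, k u v = k v u) :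
    2 * numEdges k = 2 * ∑ v, k v v + ∑ u, ∑ v ∈ Finset.univ.erase u, k u v := by
  obtain ⟨c, hc⟩ := even_sum_sum_erase hsym Finset.univ
  unfold numEdges
  omega

lemma wA_univ (hsym : ∀ u v, k u v = k v u) : wA k w Finset.univ = 2 * genus k w - 2 := by
  have hedges : 2 * (numEdges k : ℤ)
      = 2 * ∑ v, (k v v : ℤ) + ∑ u, ∑ v ∈ Finset.univ.erase u, (k u v : ℤ) := by
    exact_mod_cast two_mul_numEdges hsym
  have hswap : ∑ v, ∑ u ∈ Finset.univ.erase v, (k u v : ℤ)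
      = ∑ u, ∑ v ∈ Finset.univ.erase u, (k u v : ℤ) := by
    simp only [hsym _ (_ : V)]
  unfold wA genus
  simp only [Finset.sum_add_distrib, Finset.sum_sub_distrib, ← Finset.mul_sum, hswap,
    Finset.sum_const, Finset.card_univ, nsmul_eq_mul]
  linarith

lemma wA_compl (hsym : ∀ u v, k u v = k v u) (S : Finset V) :
    wA k w Sᶜ = 2 * genus k w - 2 - wA k w S := by
  rw [← wA_univ w hsym, eq_sub_iff_add_eq', wA, wA, Finset.sum_add_sum_compl, wA]

lemma mA_union (hsym : ∀ u v, k u v = k v u) (D : ℤ) {S T : Finset V} (h : Disjoint S T) :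
    mA k w D (S ∪ T) = mA k w D S + mA k w D T + edgesBetween k S T := by
  have hw : wA k w (S ∪ T) = wA k w S + wA k w T := Finset.sum_union h
  unfold mA
  rw [hw, deltaA_union hsym h]
  push_cast
  ring

lemma mA_compl (hsym : ∀ u v, k u v = k v u) (hg : genus k w ≠ 1) (D : ℤ) (S : Finset V) :
    mA k w D Sᶜ = D - mA k w D S - deltaA k S := by
  have hden : ((2 * genus k w - 2 : ℤ) : ℚ) ≠ 0 := by
    exact_mod_cast (by omega : 2 * genus k w - 2 ≠ 0)
  unfold mA
  rw [wA_compl w hsym, deltaA_compl hsym, Int.cast_sub (2 * genus k w - 2), mul_sub, sub_div,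
    mul_div_cancel_right₀ _ hden]
  ring

lemma degA_compl (d : V → ℤ) (S : Finset V) : degA d Sᶜ = degA d Finset.univ - degA d S := by
  rw [eq_sub_iff_add_eq', degA, degA, Finset.sum_add_sum_compl, degA]

lemma IsBalanced.degA_le {D : ℤ} {d : V → ℤ} (hbal : IsBalanced k w D d)
    (hsym : ∀ u v, k u v = k v u) (hg : genus k w ≠ 1) (S : Finset V) :
    (degA d S : ℚ) ≤ mA k w D S + deltaA k S := by
  have hcompl := hbal.2 Sᶜ
  rw [mA_compl w hsym hg, degA_compl, hbal.1] at hcompl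
  push_cast at hcompl
  linarith

end Balanced

theorem stmt10_general (V : Type) [Fintype V] [DecidableEq V] (k : V → V → ℕ) (w : V → ℕ)
    (hsym : ∀ u v, k u v = k v u) (hg : 2 ≤ genus k w)
    (D : ℤ) (d : V → ℤ) (hbal : IsBalanced k w D d)
    (A B : Finset V) (hA : (degA d A : ℚ) = mA k w D A)
    (hBsub : B ⊆ Aᶜ)
    (hBcomp : ∀ u ∈ B, ∀ v : V, v ∉ A → v ∉ B → k u v = 0) :
    (degA d (A ∪ B) : ℚ) = mA k w D (A ∪ B) := by
  have hdisj : Disjoint A B := (Finset.subset_compl_iff_disjoint_right.1 hBsub).symm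
  have hδB : deltaA k B = edgesBetween k A B := by
    rw [deltaA_eq_edgesBetween_of_neighbors_subset hdisj.symm hBcomp, edgesBetween_comm hsym]
  have hB := hbal.degA_le w hsym (by omega) B
  have hAB := hbal.2 (A ∪ B)
  rw [mA_union w hsym D hdisj, degA_union d hdisj] at hAB ⊢
  rw [hδB] at hB
  push_cast at hAB ⊢
  linarith

/-- If `d` is balanced with `d_A = m_A(d)`, and `B` is a connected
component of the complement of `A` joined to `A` by exactly one edge, then
`d_{A∪B} = m_{A∪B}(d)`. -/
theorem stmt10 (V : Type) [Fintype V] [DecidableEq V] (k : V → V → ℕ) (w : V → ℕ)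
    (hsym : ∀ u v, k u v = k v u) (hstab : IsStable k w) (hg : 2 ≤ genus k w)
    (D : ℤ) (d : V → ℤ) (hbal : IsBalanced k w D d)
    (A B : Finset V) (hA : (degA d A : ℚ) = mA k w D A)
    (hBsub : B ⊆ Aᶜ) (hBconn : IsConnectedSubset k B)
    (hBcomp : ∀ u ∈ B, ∀ v : V, v ∉ A → v ∉ B → k u v = 0)
    (hone : ∑ u ∈ B, ∑ v ∈ A, k u v = 1) :
    (degA d (A ∪ B) : ℚ) = mA k w D (A ∪ B) :=
  stmt10_general V k w hsym hg D d hbal A B hA hBsub hBcomp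
end
end

section
/- Fix an integer g ≥ 2 and an integer d. Suppose gcd(d−g+1, 2g−2) ≠ 1 and that no stable vine graph of genus g with δ = 2 edges is d-special. Then gcd(d−g+1, 2g−2) = 2, g is even, and the vine graph of genus g with δ = 3 edges and weights g₁ = g₂ = g/2 − 1 is d-special. -/
open Finset

noncomputable section
open scoped Classical

variable {V : Type} [Fintype V] [DecidableEq V]

/-!
On a vine graph, if `a = m_{0}(D)` is an integer then the multidegree `(a, D - a)` is balanced
but not strictly balanced. If `f = gcd(d, g - 1) ≥ 2`, the stable vine with `δ = 2` and weights
`(g - 1)/f`, `(g - 1) - (g - 1)/f` has `m_{0}(d) = d/f - 1 ∈ ℤ`. Hence `d` is prime to `g - 1`,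
so `gcd(d - g + 1, 2g - 2)` divides `2`; being `≠ 1` it is `2`, which forces `g - 1` and `d`
to be odd. The vine with `δ = 3` and weights `g/2 - 1` then has `m_{0}(d) = (d - 3)/2 ∈ ℤ`.
-/

lemma Finset.fin_two_cases (A : Finset (Fin 2)) :
    A = ∅ ∨ A = {0} ∨ A = {1} ∨ A = univ := by
  revert A; decide

namespace Vine

lemma genus_eq (δ g1 g2 : ℕ) :
    genus (vineK δ) (vineW g1 g2) = (g1 : ℤ) + g2 + δ - 1 := by
  have hE : numEdges (vineK δ) = δ := by
    simp [numEdges, vineK, Fin.sum_univ_two, show univ.erase (0 : Fin 2) = {1} by decide,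
      show univ.erase (1 : Fin 2) = {0} by decide]
    omega
  simp [genus, hE, vineW, Fin.sum_univ_two]
  ring

lemma wA_zero (δ g1 g2 : ℕ) : wA (vineK δ) (vineW g1 g2) {0} = 2 * (g1 : ℤ) - 2 + δ := by
  simp [wA, vineK, vineW, Finset.erase_eq]

lemma wA_one (δ g1 g2 : ℕ) : wA (vineK δ) (vineW g1 g2) {1} = 2 * (g2 : ℤ) - 2 + δ := by
  simp [wA, vineK, vineW, Finset.erase_eq]

lemma deltaA_zero (δ : ℕ) : deltaA (vineK δ) {0} = δ := by
  simp [deltaA, vineK, Finset.compl_eq_univ_sdiff]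

lemma deltaA_one (δ : ℕ) : deltaA (vineK δ) {1} = δ := by
  simp [deltaA, vineK, Finset.compl_eq_univ_sdiff]

lemma mA_zero (δ g1 g2 : ℕ) (D : ℤ) :
    mA (vineK δ) (vineW g1 g2) D {0} =
      D * (2 * g1 - 2 + δ) / (2 * ((g1 : ℚ) + g2 + δ - 1) - 2) - δ / 2 := by
  rw [mA, genus_eq, wA_zero, deltaA_zero]
  push_cast
  rfl

variable {δ g1 g2 : ℕ} {D : ℤ}

lemma genus_denom_ne_zero (hG : g1 + g2 + δ ≠ 2) : 2 * ((g1 : ℚ) + g2 + δ - 1) - 2 ≠ 0 := by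
  intro h
  apply hG
  exact_mod_cast (by linarith : (g1 : ℚ) + g2 + δ = 2)

lemma mA_one (hG : g1 + g2 + δ ≠ 2) :
    mA (vineK δ) (vineW g1 g2) D {1} = D - δ - mA (vineK δ) (vineW g1 g2) D {0} := by
  have hsum : (D : ℚ) * (2 * g2 - 2 + δ) / (2 * ((g1 : ℚ) + g2 + δ - 1) - 2)
      + D * (2 * g1 - 2 + δ) / (2 * ((g1 : ℚ) + g2 + δ - 1) - 2) = D := by
    rw [← add_div, div_eq_iff (genus_denom_ne_zero hG)]
    ring
  rw [mA_zero, mA, genus_eq, wA_one, deltaA_one]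
  push_cast
  linarith

lemma mA_univ (hG : g1 + g2 + δ ≠ 2) : mA (vineK δ) (vineW g1 g2) D univ = D := by
  have hw : wA (vineK δ) (vineW g1 g2) univ = 2 * ((g1 : ℤ) + g2 + δ - 1) - 2 := by
    simp [wA, vineK, vineW, Fin.sum_univ_two]
    ring
  rw [mA, hw, genus_eq]
  simp [deltaA, genus_denom_ne_zero hG]

lemma mA_empty : mA (vineK δ) (vineW g1 g2) D ∅ = 0 := by
  simp [mA, wA, deltaA]

lemma not_isDGeneral_of_mA_zero_eq (hG : g1 + g2 + δ ≠ 2) {a : ℤ}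
    (ha : mA (vineK δ) (vineW g1 g2) D {0} = a) : ¬ IsDGeneral (vineK δ) (vineW g1 g2) D := by
  let d : Fin 2 → ℤ := ![a, D - a]
  have hbal : IsBalanced (vineK δ) (vineW g1 g2) D d := by
    refine ⟨by simp [d, degA], fun A => ?_⟩
    rcases Finset.fin_two_cases A with rfl | rfl | rfl | rfl
    · simp [mA_empty, degA]
    · simp [ha, degA, d]
    · rw [mA_one hG, ha]
      simp [degA, d]
    · simp [mA_univ hG, degA, d]
  intro hgen
  have := (hgen d hbal).2 {0} (by decide) (by decide)
  simp [ha, degA, d] at this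

end Vine

lemma not_isDGeneral_vine_two_of_add_eq_mul {a b f : ℕ} (hab : a + b = f * a) (ha : 0 < a)
    (t : ℤ) : ¬ IsDGeneral (vineK 2) (vineW a b) (f * t) := by
  refine Vine.not_isDGeneral_of_mA_zero_eq (by omega) (a := t - 1) ?_
  have habq : (a : ℚ) + b = f * a := by exact_mod_cast hab
  have hfa : 2 * ((f : ℚ) * a) ≠ 0 := by
    rw [← habq]
    positivity
  have hquot : (f * t : ℚ) * (2 * a - 2 + 2) / (2 * (f * a)) = t := by
    rw [div_eq_iff hfa]
    ring
  rw [Vine.mA_zero]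
  push_cast
  rw [show 2 * ((a : ℚ) + b + 2 - 1) - 2 = 2 * (f * a) by linarith, hquot]
  ring

lemma isCoprime_of_forall_stableVine_two_isDGeneral {g d : ℤ} (hg : 2 ≤ g)
    (h2 : ∀ g1 g2 : ℕ, StableVine g g1 g2 2 → IsDGeneral (vineK 2) (vineW g1 g2) d) :
    IsCoprime d (g - 1) := by
  rw [Int.isCoprime_iff_gcd_eq_one]
  by_contra hf
  lift g - 1 to ℕ using (by omega) with n hn
  set f := Int.gcd d n
  obtain ⟨t, hdt⟩ := Int.gcd_dvd_left d n
  have hfn : f ∣ n := Int.ofNat_dvd.mp (Int.gcd_dvd_right d n)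
  have hf2 : 2 ≤ f := by
    have : f ≠ 0 := fun h => by simp [f, Int.gcd_eq_zero_iff] at h; omega
    omega
  have hpos : 0 < n / f := Nat.div_pos (Nat.le_of_dvd (by omega) hfn) (by omega)
  have hlt : n / f < n := Nat.div_lt_self (by omega) (by omega)
  have hab : n / f + (n - n / f) = f * (n / f) := by
    rw [Nat.mul_div_cancel' hfn]
    omega
  have hstable : StableVine g (n / f) (n - n / f) 2 := ⟨le_rfl, by omega, by push_cast; omega⟩
  rw [hdt] at h2
  exact not_isDGeneral_vine_two_of_add_eq_mul hab hpos t (h2 _ _ hstable)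

lemma gcd_sub_two_mul_eq_two {d n : ℤ} (hcop : IsCoprime d n) (h : Int.gcd (d - n) (2 * n) ≠ 1) :
    Int.gcd (d - n) (2 * n) = 2 := by
  have hcop' : IsCoprime (d - n) n := by
    simpa using (IsCoprime.sub_mul_right_left_iff (z := 1)).mpr hcop
  have hdvd : (Int.gcd (d - n) (2 * n) : ℤ) ∣ 2 :=
    (hcop'.of_isCoprime_of_dvd_left (Int.gcd_dvd_left _ _)).dvd_of_dvd_mul_right
      (Int.gcd_dvd_right _ _)
  have := Nat.le_of_dvd two_pos (Int.ofNat_dvd.mp hdvd)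
  have : Int.gcd (d - n) (2 * n) ≠ 0 := fun h0 => by simp [h0] at hdvd
  omega

lemma odd_and_odd_of_isCoprime_of_two_dvd_sub {d n : ℤ} (hcop : IsCoprime d n)
    (h : 2 ∣ d - n) : Odd d ∧ Odd n := by
  rw [Int.isCoprime_iff_gcd_eq_one] at hcop
  have hn : ¬ 2 ∣ n := fun hn => by
    simpa [hcop] using Int.dvd_gcd (show 2 ∣ d by omega) hn
  constructor <;> rw [Int.odd_iff] <;> omega

lemma not_isDGeneral_vine_three_of_odd (m : ℕ) {d : ℤ} (hd : Odd d) :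
    ¬ IsDGeneral (vineK 3) (vineW m m) d := by
  obtain ⟨k, rfl⟩ := hd
  refine Vine.not_isDGeneral_of_mA_zero_eq (by omega) (a := k - 1) ?_
  have hquot : (2 * k + 1 : ℚ) * (2 * m - 2 + 3) / (2 * (m + m + 3 - 1) - 2) = k + 1 / 2 := by
    rw [div_eq_iff (ne_of_gt (by linarith [(m.cast_nonneg : (0 : ℚ) ≤ m)]))]
    ring
  rw [Vine.mA_zero]
  push_cast
  rw [hquot]
  ring

/-- If `gcd(d−g+1, 2g−2) ≠ 1` and no stable vine graph of genus
`g` with `δ = 2` edges is `d`-special, then `gcd(d−g+1, 2g−2) = 2`, `g` is even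
and the vine graph with `δ = 3`, `g₁ = g₂ = g/2 − 1` is `d`-special. -/
theorem stmt15 (g d : ℤ) (hg : 2 ≤ g)
    (h1 : Int.gcd (d - g + 1) (2 * g - 2) ≠ 1)
    (h2 : ∀ g1 g2 : ℕ, StableVine g g1 g2 2 → IsDGeneral (vineK 2) (vineW g1 g2) d) :
    Int.gcd (d - g + 1) (2 * g - 2) = 2 ∧
      ∃ m : ℕ, g = 2 * ((m : ℤ) + 1) ∧ ¬ IsDGeneral (vineK 3) (vineW m m) d := by
  have hcop : IsCoprime d (g - 1) := isCoprime_of_forall_stableVine_two_isDGeneral hg h2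
  rw [show d - g + 1 = d - (g - 1) by ring, show 2 * g - 2 = 2 * (g - 1) by ring] at h1 ⊢
  have hgcd := gcd_sub_two_mul_eq_two hcop h1
  have htwo : 2 ∣ d - (g - 1) := by
    simpa [hgcd] using Int.gcd_dvd_left (d - (g - 1)) (2 * (g - 1))
  obtain ⟨hd, ⟨k, hk⟩⟩ := odd_and_odd_of_isCoprime_of_two_dvd_sub hcop htwo
  refine ⟨hgcd, k.toNat, by omega, not_isDGeneral_vine_three_of_odd _ hd⟩
end
end
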